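/- Every element q of K that is algebraic over the prime field F_p belongs to Q; in particular O, R and Q all contain the relative algebraic closure k₀ = {q ∈ K : q is algebraic over F_p} of F_p in K, and are thus k₀-algebras. -/

import Mathlib

/-- `q : K` is algebraic over the prime field `𝔽_p`. -/
def AlgebraicOverPrime (p : ℕ) {K : Type*} [Field K] [CharP K p] (q : K) : Prop :=
  ∃ f : Polynomial (ZMod p), f ≠ 0 ∧ Polynomial.eval₂ (ZMod.castHom dvd_rfl K) q f = 0

/-- A pre-diffeo-valued field structure on a field `K` of characteristic `p`,
with value group `Γ`, residue field `k` and mock `K/M` module `D`.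
Maps defined on subrings (`res`, `d`, `π`, the scalar action of `O` on `D`) are
encoded as total functions whose behaviour is only constrained on the relevant subring. -/
structure PreDiffeoValued (p : ℕ) (K : Type*) [Field K]
    (Γ : Type*) [AddCommGroup Γ] [LinearOrder Γ] [IsOrderedAddMonoid Γ]
    (k : Type*) [Field k] (D : Type*) [AddCommGroup D] where
  /-- the valuation, with `⊤` playing the role of `∞` -/
  v : K → WithTop Γ
  v_surj : ∀ γ : Γ, ∃ x : K, v x = (γ : WithTop Γ)
  v_eq_top_iff : ∀ x : K, v x = ⊤ ↔ x = 0
  v_mul : ∀ x y : K, v (x * y) = v x + v y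
  v_add : ∀ x y : K, min (v x) (v y) ≤ v (x + y)
  /-- the valuation ring `O = {x : v x ≥ 0}` (with maximal ideal `M = {x : v x > 0}`) -/
  O : Subring K
  mem_O_iff : ∀ x : K, x ∈ O ↔ 0 ≤ v x
  /-- the residue map `O → k` -/
  res : K → k
  res_add : ∀ x ∈ O, ∀ y ∈ O, res (x + y) = res x + res y
  res_mul : ∀ x ∈ O, ∀ y ∈ O, res (x * y) = res x * res y
  res_one : res 1 = 1
  res_surjective : ∀ z : k, ∃ x ∈ O, res x = z
  res_eq_zero_iff : ∀ x ∈ O, (res x = 0 ↔ 0 < v x)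
  /-- the scalar action of `O` on `D` -/
  smul : K → D → D
  smul_add : ∀ a ∈ O, ∀ x y : D, smul a (x + y) = smul a x + smul a y
  add_smul : ∀ a ∈ O, ∀ b ∈ O, ∀ x : D, smul (a + b) x = smul a x + smul b x
  mul_smul : ∀ a ∈ O, ∀ b ∈ O, ∀ x : D, smul (a * b) x = smul a (smul b x)
  one_smul : ∀ x : D, smul 1 x = x
  /-- `D` is a divisible `O`-module -/
  divisible : ∀ a ∈ O, a ≠ 0 → ∀ y : D, ∃ x : D, smul a x = y
  /-- any two elements of `D` are comparable under the divisibility order -/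
  total : ∀ x y : D, (∃ a ∈ O, x = smul a y) ∨ (∃ a ∈ O, y = smul a x)
  /-- the `O`-module embedding of the residue field `k` into `D` -/
  phi : k → D
  phi_add : ∀ z w : k, phi (z + w) = phi z + phi w
  phi_injective : Function.Injective phi
  phi_smul : ∀ a ∈ O, ∀ z : k, phi (res a * z) = smul a (phi z)
  /-- the subring `R ⊆ O` -/
  R : Subring K
  R_le_O : (R : Set K) ⊆ (O : Set K)
  /-- the surjective derivation `d : R → k`, with `Q = ker d` -/
  d : K → k
  d_add : ∀ x ∈ R, ∀ y ∈ R, d (x + y) = d x + d y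
  d_leibniz : ∀ x ∈ R, ∀ y ∈ R, d (x * y) = res x * d y + res y * d x
  d_surjective : ∀ z : k, ∃ x ∈ R, d x = z
  /-- the surjective `Q`-module map `π : O → D` with kernel `Q` -/
  pi : K → D
  pi_add : ∀ x ∈ O, ∀ y ∈ O, pi (x + y) = pi x + pi y
  pi_qsmul : ∀ q ∈ R, d q = 0 → ∀ x ∈ O, pi (q * x) = smul q (pi x)
  pi_surjective : ∀ y : D, ∃ x ∈ O, pi x = y
  pi_eq_zero_iff : ∀ x ∈ O, (pi x = 0 ↔ x ∈ R ∧ d x = 0)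
  pi_eq_phi_d : ∀ x ∈ R, pi x = phi (d x)
  /-- in characteristic `2`, squares of elements of `O` lie in `Q` -/
  char_two_sq : p = 2 → ∀ a ∈ O, a ^ 2 ∈ R ∧ d (a ^ 2) = 0
  /-- in odd characteristic, `π` is a derivation -/
  char_odd_pi : p ≠ 2 → ∀ a ∈ O, ∀ b ∈ O, pi (a * b) = smul a (pi b) + smul b (pi a)

namespace PreDiffeoValued

variable {p : ℕ} {K : Type*} [Field K] {Γ : Type*} [AddCommGroup Γ] [LinearOrder Γ] [IsOrderedAddMonoid Γ]
  {k : Type*} [Field k] {D : Type*} [AddCommGroup D]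

/-- The constant ring `Q = ker d`, as a subset of `K`. -/
def Q (P : PreDiffeoValued p K Γ k D) : Set K := {x | x ∈ P.R ∧ P.d x = 0}

/-- The pre-diffeo-valued structure is dense: `Q` is dense in `O` for the valuation topology. -/
def IsDense (P : PreDiffeoValued p K Γ k D) : Prop :=
  ∀ a ∈ P.O, ∀ γ : Γ, ∃ q ∈ P.Q, (γ : WithTop Γ) < P.v (a - q)

end PreDiffeoValued

/-! An element `q` algebraic over `𝔽_p` lies in a finite field, so `q ^ p ^ n = q` for some
`n > 0`. Hence `q` is zero or a root of unity, of valuation `0`, and `q ∈ O`. In characteristic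
`2`, `q = (q ^ 2 ^ (n - 1)) ^ 2` is the square of an element of `O`, hence lies in `Q`. In odd
characteristic `π` is a derivation, so `π q = π (q ^ p ^ n) = p ^ n q ^ (p ^ n - 1) π q = 0`,
and `Q = ker π`. -/

open IntermediateField in
theorem AlgebraicOverPrime.exists_pow_prime_pow_eq_self {p : ℕ} (hp : p.Prime) {K : Type*}
    [Field K] [CharP K p] {q : K} (hq : AlgebraicOverPrime p q) :
    ∃ n : ℕ, 0 < n ∧ q ^ p ^ n = q := by
  have : Fact p.Prime := ⟨hp⟩
  let := ZMod.algebra K p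
  obtain ⟨f, hf0, hf⟩ := hq
  have hint : IsIntegral (ZMod p) q := IsAlgebraic.isIntegral ⟨f, hf0, hf⟩
  have := adjoin.finiteDimensional hint
  have := Module.finite_of_finite (ZMod p) (M := (ZMod p)⟮q⟯)
  let := Fintype.ofFinite (ZMod p)⟮q⟯
  obtain ⟨n, -, hcard⟩ := FiniteField.card (ZMod p)⟮q⟯ p
  refine ⟨n, n.pos, ?_⟩
  have := congrArg Subtype.val
    (FiniteField.pow_card (⟨q, mem_adjoin_simple_self _ q⟩ : (ZMod p)⟮q⟯))
  rwa [hcard] at this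

namespace PreDiffeoValued

variable {p : ℕ} {K : Type*} [Field K] {Γ : Type*} [AddCommGroup Γ] [LinearOrder Γ]
  [IsOrderedAddMonoid Γ] {k : Type*} [Field k] {D : Type*} [AddCommGroup D]
  (P : PreDiffeoValued p K Γ k D)

theorem v_one : P.v 1 = 0 := by
  obtain ⟨δ, hδ⟩ := WithTop.ne_top_iff_exists.mp ((P.v_eq_top_iff 1).not.mpr one_ne_zero)
  have h := P.v_mul 1 1
  rw [one_mul, ← hδ, ← WithTop.coe_add, WithTop.coe_inj] at h
  rw [← hδ, right_eq_add.mp h, WithTop.coe_zero]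

def toAddValuation : AddValuation K (WithTop Γ) :=
  AddValuation.of P.v ((P.v_eq_top_iff 0).mpr rfl) P.v_one P.v_add P.v_mul

theorem v_pow (x : K) (n : ℕ) : P.v (x ^ n) = n • P.v x :=
  P.toAddValuation.map_pow x n

theorem v_eq_zero_of_pow_eq_one {x : K} {n : ℕ} (hn : n ≠ 0) (h : x ^ n = 1) : P.v x = 0 := by
  have hx : x ≠ 0 := by rintro rfl; simp [zero_pow hn] at h
  obtain ⟨γ, hγ⟩ := WithTop.ne_top_iff_exists.mp ((P.v_eq_top_iff x).not.mpr hx)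
  have hnγ : n • γ = 0 := by
    have := congrArg P.v h
    rwa [P.v_pow, P.v_one, ← hγ, ← WithTop.coe_nsmul, WithTop.coe_eq_zero] at this
  rw [← hγ, (nsmul_eq_zero_iff.mp hnγ).resolve_right hn, WithTop.coe_zero]

theorem mem_O_of_pow_eq_self {x : K} {m : ℕ} (hm : 1 < m) (h : x ^ m = x) : x ∈ P.O := by
  rcases eq_or_ne x 0 with rfl | hx
  · exact P.O.zero_mem
  have hunit : x ^ (m - 1) = 1 := by
    apply mul_right_cancel₀ hx
    rw [← pow_succ, Nat.sub_add_cancel hm.le, h, one_mul]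
  rw [P.mem_O_iff, P.v_eq_zero_of_pow_eq_one (by omega) hunit]

theorem zero_smul (y : D) : P.smul 0 y = 0 := by
  have h := P.add_smul 0 P.O.zero_mem 0 P.O.zero_mem y
  rw [add_zero] at h
  exact right_eq_add.mp h

theorem pi_pow_succ (hp : p ≠ 2) {a : K} (ha : a ∈ P.O) (m : ℕ) :
    P.pi (a ^ (m + 1)) = P.smul ((m + 1 : ℕ) * a ^ m) (P.pi a) := by
  induction m with
  | zero => simp [P.one_smul]
  | succ m ih =>
    have hc : ((m + 1 : ℕ) : K) * a ^ m ∈ P.O :=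
      P.O.mul_mem (natCast_mem P.O _) (P.O.pow_mem ha m)
    have ham : a ^ (m + 1) ∈ P.O := P.O.pow_mem ha (m + 1)
    rw [pow_succ _ (m + 1), P.char_odd_pi hp _ ham _ ha, ih, ← P.mul_smul a ha _ hc,
      ← P.add_smul _ ham _ (P.O.mul_mem ha hc)]
    congr 1
    push_cast
    ring

theorem pi_eq_zero_of_pow_eq_self (hp : p ≠ 2) {a : K} (ha : a ∈ P.O) {m : ℕ} (hm0 : m ≠ 0)
    (hm : (m : K) = 0) (h : a ^ m = a) : P.pi a = 0 := by
  obtain ⟨t, rfl⟩ := Nat.exists_eq_succ_of_ne_zero hm0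
  have := P.pi_pow_succ hp ha t
  rwa [h, hm, zero_mul, zero_smul] at this

theorem mem_Q_iff_pi_eq_zero {a : K} (ha : a ∈ P.O) : a ∈ P.Q ↔ P.pi a = 0 :=
  (P.pi_eq_zero_iff a ha).symm

theorem mem_Q_of_pow_prime_pow_eq_self [CharP K p] (hp : p.Prime) {a : K} (ha : a ∈ P.O)
    {n : ℕ} (hn : 0 < n) (h : a ^ p ^ n = a) : a ∈ P.Q := by
  rcases eq_or_ne p 2 with rfl | hp2
  · have hsq : a = (a ^ 2 ^ (n - 1)) ^ 2 := by
      rw [← pow_mul, ← pow_succ, Nat.sub_add_cancel hn, h]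
    rw [hsq]
    exact P.char_two_sq rfl _ (P.O.pow_mem ha _)
  · refine (P.mem_Q_iff_pi_eq_zero ha).mpr (P.pi_eq_zero_of_pow_eq_self hp2 ha
      (pow_ne_zero _ hp.ne_zero) ?_ h)
    rw [Nat.cast_pow, CharP.cast_eq_zero, zero_pow hn.ne']

end PreDiffeoValued

/-- Every element `q` of `K` that is algebraic over the prime field
`𝔽_p` belongs to `Q`; in particular `O`, `R` and `Q` all contain the relative algebraic
closure `k₀` of `𝔽_p` in `K` (and are thus `k₀`-algebras). -/
theorem algebraicOverPrime_mem_Q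
    {p : ℕ} (hp : p.Prime) {K : Type*} [Field K] [CharP K p]
    {Γ : Type*} [AddCommGroup Γ] [LinearOrder Γ] [IsOrderedAddMonoid Γ]
    {k : Type*} [Field k] {D : Type*} [AddCommGroup D]
    (P : PreDiffeoValued p K Γ k D) :
    ∀ q : K, AlgebraicOverPrime p q → q ∈ P.O ∧ q ∈ P.R ∧ q ∈ P.Q := by
  intro q hq
  obtain ⟨n, hn, hqn⟩ := hq.exists_pow_prime_pow_eq_self hp
  have hqO : q ∈ P.O := P.mem_O_of_pow_eq_self (Nat.one_lt_pow hn.ne' hp.one_lt) hqn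
  have hqQ : q ∈ P.Q := P.mem_Q_of_pow_prime_pow_eq_self hp hqO hn hqn
  exact ⟨hqO, hqQ.1, hqQ⟩
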